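/- Let (X, 𝒜, μ) be a σ-finite measure space and define Aut₂(X,𝒜,μ) as the set of nonsingular invertible transformations T with √(d(μ∘T⁻¹)/dμ) − 1 ∈ L²(μ). Then Aut₂(X,𝒜,μ) is a group under composition: it contains the identity, is closed under composition, and is closed under inverses. -/

import Mathlib

/-! The Koopman operator `f ↦ (f ∘ T⁻¹) √T'` is an `L²(μ)`-contraction, and `√T'` satisfies the
cocycle identity `√((T ∘ S)') = (√S' ∘ T⁻¹) √T'`. Hence `√((T ∘ S)') − 1` is the Koopman image of
`√S' − 1` under `T` plus `√T' − 1`. Applied to `T` and `T⁻¹`, the cocycle identity says that the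
Koopman image of `√T'` under `T⁻¹` is `1`, so `√((T⁻¹)') − 1` is the Koopman image of `1 − √T'`. -/

open MeasureTheory

/-- Aut₂(X,𝒜,μ): nonsingular invertible transformations `T` (as measurable
equivalences) such that `√(d(μ∘T⁻¹)/dμ) − 1 ∈ L²(μ)`. Here `μ∘T⁻¹ = μ.map T`. -/
def Aut2 {X : Type*} [MeasurableSpace X] (μ : Measure X) : Set (X ≃ᵐ X) :=
  {T | μ.map T ≪ μ ∧ μ ≪ μ.map T ∧
    MemLp (fun x => Real.sqrt (((μ.map T).rnDeriv μ x).toReal) - 1) 2 μ}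

instance sigmaFinite_map_measurableEquiv {X : Type*} [MeasurableSpace X] (μ : Measure X)
    [SigmaFinite μ] (T : X ≃ᵐ X) : SigmaFinite (μ.map T) :=
  T.measurableEmbedding.sigmaFinite_map

theorem MeasurableEquiv.map_trans {α β γ : Type*} [MeasurableSpace α] [MeasurableSpace β]
    [MeasurableSpace γ] (μ : Measure α) (S : α ≃ᵐ β) (T : β ≃ᵐ γ) :
    μ.map (S.trans T) = (μ.map S).map T :=
  (Measure.map_map T.measurable S.measurable).symm

namespace Aut2

variable {X : Type*} [MeasurableSpace X] {μ : Measure X}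

noncomputable def sqrtJac (μ : Measure X) (T : X ≃ᵐ X) (x : X) : ℝ :=
  √((μ.map T).rnDeriv μ x).toReal

noncomputable def koopman (μ : Measure X) (T : X ≃ᵐ X) (f : X → ℝ) (x : X) : ℝ :=
  f (T.symm x) * sqrtJac μ T x

theorem mem_iff {T : X ≃ᵐ X} :
    T ∈ Aut2 μ ↔ μ.map T ≪ μ ∧ μ ≪ μ.map T ∧ MemLp (sqrtJac μ T - 1) 2 μ :=
  Iff.rfl

theorem measurable_sqrtJac (T : X ≃ᵐ X) : Measurable (sqrtJac μ T) :=
  (Measure.measurable_rnDeriv _ _).ennreal_toReal.sqrt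

theorem enorm_sqrtJac_sq {T : X ≃ᵐ X} {x : X} (hx : (μ.map T).rnDeriv μ x ≠ ⊤) :
    ‖sqrtJac μ T x‖ₑ ^ 2 = (μ.map T).rnDeriv μ x := by
  rw [sqrtJac, Real.enorm_eq_ofReal (Real.sqrt_nonneg _),
    ← ENNReal.ofReal_pow (Real.sqrt_nonneg _), Real.sq_sqrt ENNReal.toReal_nonneg,
    ENNReal.ofReal_toReal hx]

theorem sqrtJac_refl [SigmaFinite μ] : sqrtJac μ (MeasurableEquiv.refl X) =ᵐ[μ] 1 := by
  have hmap : μ.map (MeasurableEquiv.refl X) = μ := Measure.map_id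
  filter_upwards [μ.rnDeriv_self] with x hx
  simp [sqrtJac, hmap, hx]

theorem koopman_one (T : X ≃ᵐ X) : koopman μ T 1 = sqrtJac μ T :=
  funext fun _ => one_mul _

theorem koopman_sub (T : X ≃ᵐ X) (f g : X → ℝ) :
    koopman μ T (f - g) = koopman μ T f - koopman μ T g :=
  funext fun _ => sub_mul _ _ _

theorem measurable_koopman (T : X ≃ᵐ X) {f : X → ℝ} (hf : Measurable f) :
    Measurable (koopman μ T f) :=
  (hf.comp T.symm.measurable).mul (measurable_sqrtJac T)

/-- Off the zero set of `T'`, every `μ ∘ T⁻¹`-null set is `μ`-null. -/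
theorem mul_sqrtJac_congr_ae [SigmaFinite μ] {T : X ≃ᵐ X} {u v : X → ℝ}
    (h : u =ᵐ[μ.map T] v) : u * sqrtJac μ T =ᵐ[μ] v * sqrtJac μ T := by
  filter_upwards [Measure.ae_rnDeriv_ne_zero_imp_of_ae μ h] with x hx
  by_cases h0 : (μ.map T).rnDeriv μ x = 0
  · simp [sqrtJac, h0]
  · simp [hx h0]

theorem koopman_congr_ae [SigmaFinite μ] (T : X ≃ᵐ X) {f g : X → ℝ} (h : f =ᵐ[μ] g) :
    koopman μ T f =ᵐ[μ] koopman μ T g := by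
  refine mul_sqrtJac_congr_ae (u := f ∘ T.symm) (v := g ∘ T.symm) ?_
  rw [Filter.EventuallyEq, T.measurableEmbedding.ae_map_iff]
  filter_upwards [h] with x hx
  simp [hx]

theorem eLpNorm_koopman_le [SigmaFinite μ] (T : X ≃ᵐ X) (f : X → ℝ) :
    eLpNorm (koopman μ T f) 2 μ ≤ eLpNorm f 2 μ := by
  simp only [eLpNorm_eq_lintegral_rpow_enorm_toReal two_ne_zero ENNReal.ofNat_ne_top,
    ENNReal.toReal_ofNat, ENNReal.rpow_two]
  gcongr ?_ ^ _
  calc ∫⁻ x, ‖koopman μ T f x‖ₑ ^ 2 ∂μ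
      = ∫⁻ x, (μ.map T).rnDeriv μ x * ‖f (T.symm x)‖ₑ ^ 2 ∂μ := by
        refine lintegral_congr_ae ?_
        filter_upwards [Measure.rnDeriv_lt_top (μ.map T) μ] with x hx
        rw [koopman, enorm_mul, mul_pow, enorm_sqrtJac_sq hx.ne, mul_comm]
    _ = ∫⁻ x, ‖f (T.symm x)‖ₑ ^ 2 ∂μ.withDensity ((μ.map T).rnDeriv μ) :=
        (lintegral_withDensity_eq_lintegral_mul_non_measurable _
          (Measure.measurable_rnDeriv _ _) (Measure.rnDeriv_lt_top _ _) _).symm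
    _ ≤ ∫⁻ x, ‖f (T.symm x)‖ₑ ^ 2 ∂μ.map T :=
        lintegral_mono' (Measure.withDensity_rnDeriv_le _ _) le_rfl
    _ = ∫⁻ x, ‖f x‖ₑ ^ 2 ∂μ := by simp [lintegral_map_equiv]

theorem _root_.MeasureTheory.MemLp.koopman [SigmaFinite μ] (T : X ≃ᵐ X) {f : X → ℝ}
    (hf : MemLp f 2 μ) : MemLp (koopman μ T f) 2 μ := by
  refine ⟨?_, (eLpNorm_koopman_le T f).trans_lt hf.2⟩
  exact (measurable_koopman T hf.1.stronglyMeasurable_mk.measurable).aestronglyMeasurable.congr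
    (koopman_congr_ae T hf.1.ae_eq_mk).symm

theorem sqrtJac_trans [SigmaFinite μ] {S T : X ≃ᵐ X} (hS : μ.map S ≪ μ) :
    sqrtJac μ (S.trans T) =ᵐ[μ] koopman μ T (sqrtJac μ S) := by
  have hchain : ((μ.map S).map T).rnDeriv (μ.map T) * (μ.map T).rnDeriv μ
      =ᵐ[μ] ((μ.map S).map T).rnDeriv μ :=
    Measure.rnDeriv_mul_rnDeriv (hS.map T.measurable)
  have hpull : (fun x => √(((μ.map S).map T).rnDeriv (μ.map T) x).toReal)
      =ᵐ[μ.map T] sqrtJac μ S ∘ T.symm := by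
    rw [Filter.EventuallyEq, T.measurableEmbedding.ae_map_iff]
    filter_upwards [T.measurableEmbedding.rnDeriv_map (μ.map S) μ] with x hx
    simp [sqrtJac, hx]
  filter_upwards [hchain, mul_sqrtJac_congr_ae hpull] with x hchain_x hpull_x
  simp only [Pi.mul_apply, Function.comp_apply] at hpull_x hchain_x
  rw [sqrtJac, MeasurableEquiv.map_trans, ← hchain_x, ENNReal.toReal_mul,
    Real.sqrt_mul ENNReal.toReal_nonneg]
  exact hpull_x

theorem refl_mem [SigmaFinite μ] : MeasurableEquiv.refl X ∈ Aut2 μ := by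
  have hmap : μ.map (MeasurableEquiv.refl X) = μ := Measure.map_id
  refine mem_iff.mpr ⟨by rw [hmap], by rw [hmap], MemLp.zero.ae_eq ?_⟩
  filter_upwards [sqrtJac_refl] with x hx
  simp [hx]

theorem trans_mem [SigmaFinite μ] {S T : X ≃ᵐ X} (hS : S ∈ Aut2 μ) (hT : T ∈ Aut2 μ) :
    S.trans T ∈ Aut2 μ := by
  obtain ⟨hS₁, hS₂, hS₃⟩ := hS
  obtain ⟨hT₁, hT₂, hT₃⟩ := hT
  have hmap := MeasurableEquiv.map_trans μ S T
  refine mem_iff.mpr ⟨hmap ▸ (hS₁.map T.measurable).trans hT₁,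
    hmap ▸ hT₂.trans (hS₂.map T.measurable), ?_⟩
  have hcocycle : sqrtJac μ (S.trans T) - 1 =ᵐ[μ]
      koopman μ T (sqrtJac μ S - 1) + (sqrtJac μ T - 1) := by
    filter_upwards [sqrtJac_trans (T := T) hS₁] with x hx
    simp [hx, koopman_sub, koopman_one]
  exact ((hS₃.koopman T).add hT₃).ae_eq hcocycle.symm

theorem symm_mem [SigmaFinite μ] {T : X ≃ᵐ X} (hT : T ∈ Aut2 μ) : T.symm ∈ Aut2 μ := by
  obtain ⟨hT₁, hT₂, hT₃⟩ := hT
  refine mem_iff.mpr ⟨by simpa using hT₂.map T.symm.measurable,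
    by simpa using hT₁.map T.symm.measurable, ?_⟩
  have hcancel : koopman μ T.symm (sqrtJac μ T) =ᵐ[μ] 1 := by
    have h := sqrtJac_trans (T := T.symm) hT₁
    rw [T.self_trans_symm] at h
    exact h.symm.trans sqrtJac_refl
  have hinv : sqrtJac μ T.symm - 1 =ᵐ[μ] koopman μ T.symm (-(sqrtJac μ T - 1)) := by
    filter_upwards [hcancel] with x hx
    simp [koopman_sub, koopman_one, hx]
  exact (hT₃.neg.koopman T.symm).ae_eq hinv.symm

end Aut2

theorem stmt_18 {X : Type*} [MeasurableSpace X] (μ : Measure X) [SigmaFinite μ] :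
    (MeasurableEquiv.refl X ∈ Aut2 μ) ∧
    (∀ S T : X ≃ᵐ X, S ∈ Aut2 μ → T ∈ Aut2 μ → S.trans T ∈ Aut2 μ) ∧
    (∀ T : X ≃ᵐ X, T ∈ Aut2 μ → T.symm ∈ Aut2 μ) :=
  ⟨Aut2.refl_mem, fun _ _ => Aut2.trans_mem, fun _ => Aut2.symm_mem⟩
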